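/- Under the mKdV flow, the arc-length and the torsion are preserved: ⟨∂ₓγ, ∂ₜ∂ₓγ⟩ = 0 everywhere (so |∂ₓγ| ≡ 1 is consistent with the evolution), and ∂ₜλ = 0. -/

import Mathlib

open Matrix
open scoped ContDiff

noncomputable section

/-- Euclidean inner product on ℝ³ (written as `Fin 3 → ℝ`). -/
def dot3 (x y : Fin 3 → ℝ) : ℝ := x 0 * y 0 + x 1 * y 1 + x 2 * y 2

/-- Cross product on ℝ³. -/
def cross3 (x y : Fin 3 → ℝ) : Fin 3 → ℝ :=
  ![x 1 * y 2 - x 2 * y 1, x 2 * y 0 - x 0 * y 2, x 0 * y 1 - x 1 * y 0]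

/-- Euclidean norm on ℝ³. -/
def norm3 (x : Fin 3 → ℝ) : ℝ := Real.sqrt (dot3 x x)

/-- The tangent vector T = ∂ₓγ. -/
def Dx (γ : ℝ → ℝ → Fin 3 → ℝ) (x t : ℝ) : Fin 3 → ℝ := deriv (fun x' => γ x' t) x

/-- The second x-derivative ∂ₓ²γ. -/
def Dxx (γ : ℝ → ℝ → Fin 3 → ℝ) (x t : ℝ) : Fin 3 → ℝ := deriv (fun x' => Dx γ x' t) x

/-- The curvature κ = |∂ₓ²γ|. -/
def curv (γ : ℝ → ℝ → Fin 3 → ℝ) (x t : ℝ) : ℝ := norm3 (Dxx γ x t)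

/-- The principal normal vector N = ∂ₓ²γ / κ. -/
def Nv (γ : ℝ → ℝ → Fin 3 → ℝ) (x t : ℝ) : Fin 3 → ℝ := (curv γ x t)⁻¹ • Dxx γ x t

/-- The binormal vector B = T × N. -/
def Bv (γ : ℝ → ℝ → Fin 3 → ℝ) (x t : ℝ) : Fin 3 → ℝ := cross3 (Dx γ x t) (Nv γ x t)

/-- The torsion λ = −⟨N, ∂ₓB⟩. -/
def tors (γ : ℝ → ℝ → Fin 3 → ℝ) (x t : ℝ) : ℝ :=
  - dot3 (Nv γ x t) (deriv (fun x' => Bv γ x' t) x)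

variable {E : Type*} [NormedAddCommGroup E] [NormedSpace ℝ E]
variable {F : Type*} [NormedAddCommGroup F] [NormedSpace ℝ F]

/-- partial derivative in the first variable -/
def pd1 (f : ℝ → ℝ → E) : ℝ → ℝ → E := fun x t => deriv (fun x' => f x' t) x
/-- partial derivative in the second variable -/
def pd2 (f : ℝ → ℝ → E) : ℝ → ℝ → E := fun x t => deriv (fun s => f x s) t

theorem smooth_fix2 {f : ℝ → ℝ → E} (hf : ContDiff ℝ ∞ (fun p : ℝ × ℝ => f p.1 p.2)) (t : ℝ) :
    ContDiff ℝ ∞ (fun x => f x t) :=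
  hf.comp (contDiff_id.prodMk contDiff_const)

theorem smooth_fix1 {f : ℝ → ℝ → E} (hf : ContDiff ℝ ∞ (fun p : ℝ × ℝ => f p.1 p.2)) (x : ℝ) :
    ContDiff ℝ ∞ (fun s => f x s) :=
  hf.comp (contDiff_const.prodMk contDiff_id)

theorem hasDerivAt_fix2 {f : ℝ → ℝ → E} (hf : ContDiff ℝ ∞ (fun p : ℝ × ℝ => f p.1 p.2))
    (x t : ℝ) :
    HasDerivAt (fun x' => f x' t) (fderiv ℝ (fun p : ℝ × ℝ => f p.1 p.2) (x, t) (1, 0)) x := by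
  have h1 : HasFDerivAt (fun x' : ℝ => (x', t)) (ContinuousLinearMap.inl ℝ ℝ ℝ) x :=
    hasFDerivAt_prodMk_left x t
  have h2 : HasFDerivAt (fun p : ℝ × ℝ => f p.1 p.2)
      (fderiv ℝ (fun p : ℝ × ℝ => f p.1 p.2) (x, t)) (x, t) :=
    (hf.differentiable (by norm_num)).differentiableAt.hasFDerivAt
  have := (h2.comp x h1).hasDerivAt
  simpa [Function.comp_def] using this

theorem hasDerivAt_fix1 {f : ℝ → ℝ → E} (hf : ContDiff ℝ ∞ (fun p : ℝ × ℝ => f p.1 p.2))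
    (x t : ℝ) :
    HasDerivAt (fun s => f x s) (fderiv ℝ (fun p : ℝ × ℝ => f p.1 p.2) (x, t) (0, 1)) t := by
  have h1 : HasFDerivAt (fun s : ℝ => (x, s)) (ContinuousLinearMap.inr ℝ ℝ ℝ) t :=
    hasFDerivAt_prodMk_right x t
  have h2 : HasFDerivAt (fun p : ℝ × ℝ => f p.1 p.2)
      (fderiv ℝ (fun p : ℝ × ℝ => f p.1 p.2) (x, t)) (x, t) :=
    (hf.differentiable (by norm_num)).differentiableAt.hasFDerivAt
  have := (h2.comp t h1).hasDerivAt
  simpa [Function.comp_def] using this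

theorem pd1_eq {f : ℝ → ℝ → E} (hf : ContDiff ℝ ∞ (fun p : ℝ × ℝ => f p.1 p.2)) (x t : ℝ) :
    pd1 f x t = fderiv ℝ (fun p : ℝ × ℝ => f p.1 p.2) (x, t) (1, 0) :=
  (hasDerivAt_fix2 hf x t).deriv

theorem pd2_eq {f : ℝ → ℝ → E} (hf : ContDiff ℝ ∞ (fun p : ℝ × ℝ => f p.1 p.2)) (x t : ℝ) :
    pd2 f x t = fderiv ℝ (fun p : ℝ × ℝ => f p.1 p.2) (x, t) (0, 1) :=
  (hasDerivAt_fix1 hf x t).deriv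

theorem smooth_pd1 {f : ℝ → ℝ → E} (hf : ContDiff ℝ ∞ (fun p : ℝ × ℝ => f p.1 p.2)) :
    ContDiff ℝ ∞ (fun p : ℝ × ℝ => pd1 f p.1 p.2) := by
  have h : ContDiff ℝ ∞ (fun p : ℝ × ℝ => fderiv ℝ (fun q : ℝ × ℝ => f q.1 q.2) p (1, 0)) :=
    (hf.fderiv_right (le_refl _)).clm_apply contDiff_const
  have e : (fun p : ℝ × ℝ => pd1 f p.1 p.2)
      = fun p : ℝ × ℝ => fderiv ℝ (fun q : ℝ × ℝ => f q.1 q.2) p (1, 0) :=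
    funext fun p => pd1_eq hf p.1 p.2
  rw [e]
  exact h

theorem smooth_pd2 {f : ℝ → ℝ → E} (hf : ContDiff ℝ ∞ (fun p : ℝ × ℝ => f p.1 p.2)) :
    ContDiff ℝ ∞ (fun p : ℝ × ℝ => pd2 f p.1 p.2) := by
  have h : ContDiff ℝ ∞ (fun p : ℝ × ℝ => fderiv ℝ (fun q : ℝ × ℝ => f q.1 q.2) p (0, 1)) :=
    (hf.fderiv_right (le_refl _)).clm_apply contDiff_const
  have e : (fun p : ℝ × ℝ => pd2 f p.1 p.2)
      = fun p : ℝ × ℝ => fderiv ℝ (fun q : ℝ × ℝ => f q.1 q.2) p (0, 1) :=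
    funext fun p => pd2_eq hf p.1 p.2
  rw [e]
  exact h

theorem clairaut {f : ℝ → ℝ → E} (hf : ContDiff ℝ ∞ (fun p : ℝ × ℝ => f p.1 p.2)) (x t : ℝ) :
    pd2 (pd1 f) x t = pd1 (pd2 f) x t := by
  set F : ℝ × ℝ → E := fun p => f p.1 p.2 with hF
  have hdF : Differentiable ℝ F := hf.differentiable (by norm_num)
  have hdF' : ContDiff ℝ ∞ (fderiv ℝ F) := hf.fderiv_right (le_refl _)
  have hdF'd : Differentiable ℝ (fderiv ℝ F) := hdF'.differentiable (by norm_num)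
  have hsym : ∀ v w, fderiv ℝ (fderiv ℝ F) (x, t) v w = fderiv ℝ (fderiv ℝ F) (x, t) w v :=
    second_derivative_symmetric (fun y => (hdF y).hasFDerivAt)
      (hdF'd (x, t)).hasFDerivAt
  have e1 : (fun p : ℝ × ℝ => pd1 f p.1 p.2) = fun p => fderiv ℝ F p (1, 0) :=
    funext fun p => pd1_eq hf p.1 p.2
  have e2 : (fun p : ℝ × ℝ => pd2 f p.1 p.2) = fun p => fderiv ℝ F p (0, 1) :=
    funext fun p => pd2_eq hf p.1 p.2
  have hL : pd2 (pd1 f) x t = fderiv ℝ (fun p : ℝ × ℝ => fderiv ℝ F p (1, 0)) (x, t) (0, 1) := by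
    have := pd2_eq (f := pd1 f) (smooth_pd1 hf) x t
    rw [this, e1]
  have hR : pd1 (pd2 f) x t = fderiv ℝ (fun p : ℝ × ℝ => fderiv ℝ F p (0, 1)) (x, t) (1, 0) := by
    have := pd1_eq (f := pd2 f) (smooth_pd2 hf) x t
    rw [this, e2]
  rw [hL, hR]
  rw [fderiv_clm_apply (hdF'd (x, t)) (differentiableAt_const _),
    fderiv_clm_apply (hdF'd (x, t)) (differentiableAt_const _)]
  simp [hsym (1, 0) (0, 1)]

section algebra
variable (a b c d : Fin 3 → ℝ) (r : ℝ)
lemma dot3_comm : dot3 a b = dot3 b a := by simp [dot3]; ring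
lemma dot3_add_left : dot3 (a + b) c = dot3 a c + dot3 b c := by simp [dot3]; ring
lemma dot3_add_right : dot3 c (a + b) = dot3 c a + dot3 c b := by simp [dot3]; ring
lemma dot3_sub_left : dot3 (a - b) c = dot3 a c - dot3 b c := by simp [dot3]; ring
lemma dot3_sub_right : dot3 c (a - b) = dot3 c a - dot3 c b := by simp [dot3]; ring
lemma dot3_smul_left : dot3 (r • a) b = r * dot3 a b := by simp [dot3]; ring
lemma dot3_smul_right : dot3 b (r • a) = r * dot3 b a := by simp [dot3]; ring
lemma dot3_neg_left : dot3 (-a) b = -dot3 a b := by simp [dot3]; ring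
lemma dot3_neg_right : dot3 b (-a) = -dot3 b a := by simp [dot3]; ring
lemma dot3_zero_left : dot3 0 a = 0 := by simp [dot3]
lemma dot3_zero_right : dot3 a 0 = 0 := by simp [dot3]
lemma cross3_self : cross3 a a = 0 := by
  funext i; fin_cases i <;> simp [cross3] <;> ring
lemma cross3_add_left : cross3 (a + b) c = cross3 a c + cross3 b c := by
  funext i; fin_cases i <;> simp [cross3] <;> ring
lemma cross3_add_right : cross3 c (a + b) = cross3 c a + cross3 c b := by
  funext i; fin_cases i <;> simp [cross3] <;> ring
lemma cross3_sub_left : cross3 (a - b) c = cross3 a c - cross3 b c := by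
  funext i; fin_cases i <;> simp [cross3] <;> ring
lemma cross3_sub_right : cross3 c (a - b) = cross3 c a - cross3 c b := by
  funext i; fin_cases i <;> simp [cross3] <;> ring
lemma cross3_smul_left : cross3 (r • a) b = r • cross3 a b := by
  funext i; fin_cases i <;> simp [cross3] <;> ring
lemma cross3_smul_right : cross3 b (r • a) = r • cross3 b a := by
  funext i; fin_cases i <;> simp [cross3] <;> ring
lemma cross3_neg_left : cross3 (-a) b = -cross3 a b := by
  funext i; fin_cases i <;> simp [cross3] <;> ring
lemma cross3_neg_right : cross3 b (-a) = -cross3 b a := by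
  funext i; fin_cases i <;> simp [cross3] <;> ring
lemma cross3_zero_left : cross3 0 a = 0 := by
  funext i; fin_cases i <;> simp [cross3]
lemma cross3_zero_right : cross3 a 0 = 0 := by
  funext i; fin_cases i <;> simp [cross3]
lemma dot3_cross_self_left : dot3 a (cross3 a b) = 0 := by simp [dot3, cross3]; ring
lemma dot3_cross_self_right : dot3 b (cross3 a b) = 0 := by simp [dot3, cross3]; ring
lemma triple_cyclic : dot3 (cross3 a b) c = dot3 (cross3 b c) a := by
  simp [dot3, cross3]; ring
lemma cross3_cross3 : cross3 a (cross3 b c) = dot3 a c • b - dot3 a b • c := by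
  funext i; fin_cases i <;> simp [dot3, cross3] <;> ring
lemma lagrange3 : dot3 (cross3 a b) (cross3 a b) = dot3 a a * dot3 b b - dot3 a b ^ 2 := by
  simp [dot3, cross3]; ring
lemma dot3_pos (h : a ≠ 0) : 0 < dot3 a a := by
  have hne : ¬ (a 0 = 0 ∧ a 1 = 0 ∧ a 2 = 0) := by
    rintro ⟨p0, p1, p2⟩
    apply h
    funext i
    fin_cases i <;> simpa
  have h0 := mul_self_nonneg (a 0)
  have h1 := mul_self_nonneg (a 1)
  have h2 := mul_self_nonneg (a 2)
  unfold dot3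
  rcases lt_or_eq_of_le h0 with hp | hz0
  · nlinarith
  rcases lt_or_eq_of_le h1 with hp | hz1
  · nlinarith
  rcases lt_or_eq_of_le h2 with hp | hz2
  · nlinarith
  exact absurd ⟨by nlinarith, by nlinarith, by nlinarith⟩ hne
end algebra

section calc3
variable {f g : ℝ → Fin 3 → ℝ} {f' g' : Fin 3 → ℝ} {t : ℝ}

lemma HasDerivAt.dot3' (hf : HasDerivAt f f' t) (hg : HasDerivAt g g' t) :
    HasDerivAt (fun s => dot3 (f s) (g s)) (dot3 f' (g t) + dot3 (f t) g') t := by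
  have h0 := ((hasDerivAt_pi.1 hf 0).mul (hasDerivAt_pi.1 hg 0))
  have h1 := ((hasDerivAt_pi.1 hf 1).mul (hasDerivAt_pi.1 hg 1))
  have h2 := ((hasDerivAt_pi.1 hf 2).mul (hasDerivAt_pi.1 hg 2))
  have := (h0.add h1).add h2
  refine this.congr_deriv ?_
  simp [dot3]; ring

lemma HasDerivAt.cross3' (hf : HasDerivAt f f' t) (hg : HasDerivAt g g' t) :
    HasDerivAt (fun s => cross3 (f s) (g s)) (cross3 f' (g t) + cross3 (f t) g') t := by
  apply hasDerivAt_pi.2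
  intro i
  fin_cases i
  · have := ((hasDerivAt_pi.1 hf 1).mul (hasDerivAt_pi.1 hg 2)).sub
      ((hasDerivAt_pi.1 hf 2).mul (hasDerivAt_pi.1 hg 1))
    convert this using 1 <;> simp [cross3, Pi.mul_def, Pi.sub_def] <;> ring
  · have := ((hasDerivAt_pi.1 hf 2).mul (hasDerivAt_pi.1 hg 0)).sub
      ((hasDerivAt_pi.1 hf 0).mul (hasDerivAt_pi.1 hg 2))
    convert this using 1 <;> simp [cross3, Pi.mul_def, Pi.sub_def] <;> ring
  · have := ((hasDerivAt_pi.1 hf 0).mul (hasDerivAt_pi.1 hg 1)).sub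
      ((hasDerivAt_pi.1 hf 1).mul (hasDerivAt_pi.1 hg 0))
    convert this using 1 <;> simp [cross3, Pi.mul_def, Pi.sub_def] <;> ring
end calc3

section geometry
variable (γ : ℝ → ℝ → Fin 3 → ℝ)

/-- third x-derivative -/
def g3f (x t : ℝ) : Fin 3 → ℝ := deriv (fun x' => Dxx γ x' t) x
/-- the vector ∂ₓγ × ∂ₓ²γ -/
def e3f (x t : ℝ) : Fin 3 → ℝ := cross3 (Dx γ x t) (Dxx γ x t)
/-- x-derivatives of curvature -/
def k1f (x t : ℝ) : ℝ := deriv (fun y => curv γ y t) x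
def k2f (x t : ℝ) : ℝ := deriv (fun y => k1f γ y t) x
def k3f (x t : ℝ) : ℝ := deriv (fun y => k2f γ y t) x
def lamf (t : ℝ) : ℝ := tors γ 0 t

variable {γ}

theorem sm0 (hsm : ContDiff ℝ (⊤ : ℕ∞) (fun p : ℝ × ℝ => γ p.1 p.2)) :
    ContDiff ℝ ∞ (fun p : ℝ × ℝ => γ p.1 p.2) := hsm.of_le (by simp)

theorem sm1 (hsm : ContDiff ℝ (⊤ : ℕ∞) (fun p : ℝ × ℝ => γ p.1 p.2)) :
    ContDiff ℝ ∞ (fun p : ℝ × ℝ => Dx γ p.1 p.2) := smooth_pd1 (sm0 hsm)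

theorem sm2 (hsm : ContDiff ℝ (⊤ : ℕ∞) (fun p : ℝ × ℝ => γ p.1 p.2)) :
    ContDiff ℝ ∞ (fun p : ℝ × ℝ => Dxx γ p.1 p.2) := smooth_pd1 (sm1 hsm)

theorem sm3 (hsm : ContDiff ℝ (⊤ : ℕ∞) (fun p : ℝ × ℝ => γ p.1 p.2)) :
    ContDiff ℝ ∞ (fun p : ℝ × ℝ => g3f γ p.1 p.2) := smooth_pd1 (sm2 hsm)

theorem hD1 (hsm : ContDiff ℝ (⊤ : ℕ∞) (fun p : ℝ × ℝ => γ p.1 p.2)) (x t : ℝ) :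
    HasDerivAt (fun x' => γ x' t) (Dx γ x t) x :=
  ((smooth_fix2 (sm0 hsm) t).differentiable (by norm_num) _).hasDerivAt

theorem hD2 (hsm : ContDiff ℝ (⊤ : ℕ∞) (fun p : ℝ × ℝ => γ p.1 p.2)) (x t : ℝ) :
    HasDerivAt (fun x' => Dx γ x' t) (Dxx γ x t) x :=
  ((smooth_fix2 (sm1 hsm) t).differentiable (by norm_num) _).hasDerivAt

theorem hD3 (hsm : ContDiff ℝ (⊤ : ℕ∞) (fun p : ℝ × ℝ => γ p.1 p.2)) (x t : ℝ) :
    HasDerivAt (fun x' => Dxx γ x' t) (g3f γ x t) x :=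
  ((smooth_fix2 (sm2 hsm) t).differentiable (by norm_num) _).hasDerivAt

theorem kpos (hreg : ∀ x t, Dxx γ x t ≠ 0) (x t : ℝ) : 0 < curv γ x t :=
  Real.sqrt_pos.2 (dot3_pos _ (hreg x t))

theorem ksq (hreg : ∀ x t, Dxx γ x t ≠ 0) (x t : ℝ) :
    curv γ x t ^ 2 = dot3 (Dxx γ x t) (Dxx γ x t) :=
  Real.sq_sqrt (dot3_pos _ (hreg x t)).le

theorem ksm (hsm : ContDiff ℝ (⊤ : ℕ∞) (fun p : ℝ × ℝ => γ p.1 p.2))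
    (hreg : ∀ x t, Dxx γ x t ≠ 0) (t : ℝ) :
    ContDiff ℝ ∞ (fun x => curv γ x t) := by
  have hdot : ContDiff ℝ ∞ (fun x => dot3 (Dxx γ x t) (Dxx γ x t)) := by
    have h2 : ContDiff ℝ ∞ (fun x => Dxx γ x t) := smooth_fix2 (sm2 hsm) t
    have hc : ∀ i : Fin 3, ContDiff ℝ ∞ (fun x => Dxx γ x t i) := by
      intro i
      exact (ContinuousLinearMap.proj (R := ℝ) (φ := fun _ : Fin 3 => ℝ) i).contDiff.comp h2
    exact (((hc 0).mul (hc 0)).add ((hc 1).mul (hc 1))).add ((hc 2).mul (hc 2))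
  rw [contDiff_iff_contDiffAt]
  intro x
  show ContDiffAt ℝ ∞ (fun x => Real.sqrt (dot3 (Dxx γ x t) (Dxx γ x t))) x
  exact (Real.contDiffAt_sqrt (ne_of_gt (dot3_pos _ (hreg x t)))).comp x hdot.contDiffAt

theorem k1sm (hsm : ContDiff ℝ (⊤ : ℕ∞) (fun p : ℝ × ℝ => γ p.1 p.2))
    (hreg : ∀ x t, Dxx γ x t ≠ 0) (t : ℝ) :
    ContDiff ℝ ∞ (fun x => k1f γ x t) :=
  (contDiff_infty_iff_deriv.1 (ksm hsm hreg t)).2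

theorem k2sm (hsm : ContDiff ℝ (⊤ : ℕ∞) (fun p : ℝ × ℝ => γ p.1 p.2))
    (hreg : ∀ x t, Dxx γ x t ≠ 0) (t : ℝ) :
    ContDiff ℝ ∞ (fun x => k2f γ x t) :=
  (contDiff_infty_iff_deriv.1 (k1sm hsm hreg t)).2

theorem k3sm (hsm : ContDiff ℝ (⊤ : ℕ∞) (fun p : ℝ × ℝ => γ p.1 p.2))
    (hreg : ∀ x t, Dxx γ x t ≠ 0) (t : ℝ) :
    ContDiff ℝ ∞ (fun x => k3f γ x t) :=
  (contDiff_infty_iff_deriv.1 (k2sm hsm hreg t)).2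

theorem hK1 (hsm : ContDiff ℝ (⊤ : ℕ∞) (fun p : ℝ × ℝ => γ p.1 p.2))
    (hreg : ∀ x t, Dxx γ x t ≠ 0) (x t : ℝ) :
    HasDerivAt (fun y => curv γ y t) (k1f γ x t) x :=
  ((ksm hsm hreg t).differentiable (by norm_num) _).hasDerivAt

theorem hK2 (hsm : ContDiff ℝ (⊤ : ℕ∞) (fun p : ℝ × ℝ => γ p.1 p.2))
    (hreg : ∀ x t, Dxx γ x t ≠ 0) (x t : ℝ) :
    HasDerivAt (fun y => k1f γ y t) (k2f γ x t) x :=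
  ((k1sm hsm hreg t).differentiable (by norm_num) _).hasDerivAt

theorem hK3 (hsm : ContDiff ℝ (⊤ : ℕ∞) (fun p : ℝ × ℝ => γ p.1 p.2))
    (hreg : ∀ x t, Dxx γ x t ≠ 0) (x t : ℝ) :
    HasDerivAt (fun y => k2f γ y t) (k3f γ x t) x :=
  ((k2sm hsm hreg t).differentiable (by norm_num) _).hasDerivAt

theorem hK4 (hsm : ContDiff ℝ (⊤ : ℕ∞) (fun p : ℝ × ℝ => γ p.1 p.2))
    (hreg : ∀ x t, Dxx γ x t ≠ 0) (x t : ℝ) :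
    HasDerivAt (fun y => k3f γ y t) (deriv (fun y => k3f γ y t) x) x :=
  ((k3sm hsm hreg t).differentiable (by norm_num) _).hasDerivAt

end geometry

section algebra2
variable (a b c v : Fin 3 → ℝ)
lemma cross3_anticomm : cross3 a b = -cross3 b a := by
  funext i; fin_cases i <;> simp [cross3] <;> ring
lemma dot3_cross_swap : dot3 b (cross3 a c) = -dot3 (cross3 a b) c := by
  simp [dot3, cross3]; ring
lemma cross3_cross3_left : cross3 (cross3 a b) c = dot3 c a • b - dot3 c b • a := by
  funext i; fin_cases i <;> simp [dot3, cross3] <;> ring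
lemma expand3 :
    dot3 (cross3 a b) (cross3 a b) • v
      = (dot3 v b * dot3 a a - dot3 v a * dot3 a b) • b
        + (dot3 v a * dot3 b b - dot3 v b * dot3 a b) • a
        + dot3 (cross3 a b) v • cross3 a b := by
  funext i; fin_cases i <;> simp [dot3, cross3] <;> ring
end algebra2

lemma frame_deriv {u1 u2 u3 : ℝ → Fin 3 → ℝ} {p q r : ℝ → ℝ} {x : ℝ}
    {c21 c22 c23 c32 c33 p' q' r' : ℝ}
    (h1 : HasDerivAt u1 (u2 x) x)
    (h2 : HasDerivAt u2 (c21 • u1 x + c22 • u2 x + c23 • u3 x) x)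
    (h3 : HasDerivAt u3 (c32 • u2 x + c33 • u3 x) x)
    (hp : HasDerivAt p p' x) (hq : HasDerivAt q q' x) (hr : HasDerivAt r r' x) :
    HasDerivAt (fun y => p y • u1 y + q y • u2 y + r y • u3 y)
      ((p' + q x * c21) • u1 x + (p x + q' + q x * c22 + r x * c32) • u2 x
        + (q x * c23 + r' + r x * c33) • u3 x) x := by
  have h := ((hp.smul h1).add (hq.smul h2)).add (hr.smul h3)
  refine h.congr_deriv ?_
  funext i
  simp only [Pi.add_apply, Pi.smul_apply, smul_eq_mul]
  ring

section geometry2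
variable {γ : ℝ → ℝ → Fin 3 → ℝ}

theorem horth (hsm : ContDiff ℝ (⊤ : ℕ∞) (fun p : ℝ × ℝ => γ p.1 p.2))
    (harc : ∀ x t, dot3 (Dx γ x t) (Dx γ x t) = 1) (x t : ℝ) :
    dot3 (Dx γ x t) (Dxx γ x t) = 0 := by
  have h := (hD2 hsm x t).dot3' (hD2 hsm x t)
  have hcf : (fun x' => dot3 (Dx γ x' t) (Dx γ x' t)) = fun _ => (1:ℝ) :=
    funext fun y => harc y t
  rw [hcf] at h
  have h0 := h.unique (hasDerivAt_const x 1)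
  have hc := dot3_comm (Dxx γ x t) (Dx γ x t)
  linarith [h0, hc]

theorem hkkx (hsm : ContDiff ℝ (⊤ : ℕ∞) (fun p : ℝ × ℝ => γ p.1 p.2))
    (hreg : ∀ x t, Dxx γ x t ≠ 0) (x t : ℝ) :
    curv γ x t * k1f γ x t = dot3 (Dxx γ x t) (g3f γ x t) := by
  have ha : HasDerivAt (fun y => curv γ y t ^ 2) _ x := (hK1 hsm hreg x t).pow 2
  have hb := (hD3 hsm x t).dot3' (hD3 hsm x t)
  have hcf : (fun y => curv γ y t ^ 2) = fun y => dot3 (Dxx γ y t) (Dxx γ y t) :=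
    funext fun y => ksq hreg y t
  rw [hcf] at ha
  have h0 := ha.unique hb
  have hc := dot3_comm (g3f γ x t) (Dxx γ x t)
  norm_num at h0
  linarith [h0, hc]

theorem hg3e1 (hsm : ContDiff ℝ (⊤ : ℕ∞) (fun p : ℝ × ℝ => γ p.1 p.2))
    (harc : ∀ x t, dot3 (Dx γ x t) (Dx γ x t) = 1)
    (hreg : ∀ x t, Dxx γ x t ≠ 0) (x t : ℝ) :
    dot3 (Dx γ x t) (g3f γ x t) = -(curv γ x t ^ 2) := by
  have h := (hD2 hsm x t).dot3' (hD3 hsm x t)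
  have hcf : (fun x' => dot3 (Dx γ x' t) (Dxx γ x' t)) = fun _ => (0:ℝ) :=
    funext fun y => horth hsm harc y t
  rw [hcf] at h
  have h0 := (hasDerivAt_const x (0:ℝ)).unique h
  have := ksq hreg x t
  linarith [h0, this]

theorem hPP (harc : ∀ x t, dot3 (Dx γ x t) (Dx γ x t) = 1)
    (hsm : ContDiff ℝ (⊤ : ℕ∞) (fun p : ℝ × ℝ => γ p.1 p.2))
    (hreg : ∀ x t, Dxx γ x t ≠ 0) (x t : ℝ) :
    dot3 (e3f γ x t) (e3f γ x t) = curv γ x t ^ 2 := by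
  unfold e3f
  rw [lagrange3, harc x t, horth hsm harc x t, ksq hreg x t]
  ring

theorem htors (hsm : ContDiff ℝ (⊤ : ℕ∞) (fun p : ℝ × ℝ => γ p.1 p.2))
    (hreg : ∀ x t, Dxx γ x t ≠ 0) (x t : ℝ) :
    tors γ x t = (curv γ x t ^ 2)⁻¹ * dot3 (e3f γ x t) (g3f γ x t) := by
  have kne : curv γ x t ≠ 0 := ne_of_gt (kpos hreg x t)
  have hinv : HasDerivAt (fun y => (curv γ y t)⁻¹)
      (-(k1f γ x t) / curv γ x t ^ 2) x := (hK1 hsm hreg x t).inv kne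
  have hNd : HasDerivAt (fun x' => Nv γ x' t)
      ((curv γ x t)⁻¹ • g3f γ x t + (-(k1f γ x t) / curv γ x t ^ 2) • Dxx γ x t) x :=
    hinv.smul (hD3 hsm x t)
  have hB : HasDerivAt (fun x' => Bv γ x' t)
      (cross3 (Dxx γ x t) (Nv γ x t)
        + cross3 (Dx γ x t)
          ((curv γ x t)⁻¹ • g3f γ x t + (-(k1f γ x t) / curv γ x t ^ 2) • Dxx γ x t)) x :=
    (hD2 hsm x t).cross3' hNd
  unfold tors
  rw [hB.deriv]
  unfold Nv
  rw [dot3_smul_left]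
  rw [dot3_add_right, cross3_smul_right, dot3_smul_right, dot3_cross_self_right,
    cross3_add_right, cross3_smul_right, cross3_smul_right, dot3_add_right,
    dot3_smul_right, dot3_smul_right]
  have hsw : dot3 (Dxx γ x t) (cross3 (Dx γ x t) (g3f γ x t))
      = -dot3 (cross3 (Dx γ x t) (Dxx γ x t)) (g3f γ x t) := dot3_cross_swap _ _ _
  have h2 : dot3 (Dxx γ x t) (cross3 (Dx γ x t) (Dxx γ x t)) = 0 :=
    dot3_cross_self_right _ _
  rw [hsw, h2]
  unfold e3f
  field_simp
  ring

theorem htors3 (hsm : ContDiff ℝ (⊤ : ℕ∞) (fun p : ℝ × ℝ => γ p.1 p.2))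
    (hreg : ∀ x t, Dxx γ x t ≠ 0) (x t : ℝ) :
    dot3 (e3f γ x t) (g3f γ x t) = tors γ x t * curv γ x t ^ 2 := by
  have kne : curv γ x t ≠ 0 := ne_of_gt (kpos hreg x t)
  rw [htors hsm hreg x t]
  field_simp

theorem hstar (hsm : ContDiff ℝ (⊤ : ℕ∞) (fun p : ℝ × ℝ => γ p.1 p.2))
    (harc : ∀ x t, dot3 (Dx γ x t) (Dx γ x t) = 1)
    (hreg : ∀ x t, Dxx γ x t ≠ 0) (x t : ℝ) :
    g3f γ x t = (-(curv γ x t ^ 2)) • Dx γ x t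
      + (k1f γ x t / curv γ x t) • Dxx γ x t + tors γ x t • e3f γ x t := by
  have kne : curv γ x t ≠ 0 := ne_of_gt (kpos hreg x t)
  have key := expand3 (Dx γ x t) (Dxx γ x t) (g3f γ x t)
  have d1 : dot3 (g3f γ x t) (Dxx γ x t) = curv γ x t * k1f γ x t := by
    rw [dot3_comm]; exact (hkkx hsm hreg x t).symm
  have d2 : dot3 (g3f γ x t) (Dx γ x t) = -(curv γ x t ^ 2) := by
    rw [dot3_comm]; exact hg3e1 hsm harc hreg x t
  have d3 : dot3 (cross3 (Dx γ x t) (Dxx γ x t)) (g3f γ x t)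
      = tors γ x t * curv γ x t ^ 2 := htors3 hsm hreg x t
  rw [show cross3 (Dx γ x t) (Dxx γ x t) = e3f γ x t from rfl] at key
  rw [hPP harc hsm hreg x t, d1, d2, harc x t, horth hsm harc x t,
    ksq hreg x t] at key
  rw [show dot3 (e3f γ x t) (g3f γ x t) = tors γ x t * curv γ x t ^ 2 from
    htors3 hsm hreg x t] at key
  have hk2 : dot3 (Dxx γ x t) (Dxx γ x t) = curv γ x t ^ 2 := (ksq hreg x t).symm
  rw [hk2] at key
  have h2ne : curv γ x t ^ 2 ≠ 0 := pow_ne_zero 2 kne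
  have key' : g3f γ x t = (curv γ x t ^ 2)⁻¹ •
      ((curv γ x t * k1f γ x t * 1 - -curv γ x t ^ 2 * 0) • Dxx γ x t +
        (-curv γ x t ^ 2 * curv γ x t ^ 2 - curv γ x t * k1f γ x t * 0) • Dx γ x t +
      (tors γ x t * curv γ x t ^ 2) • e3f γ x t) := by
    rw [eq_comm, inv_smul_eq_iff₀ h2ne]
    exact key.symm
  rw [key']
  funext i
  simp only [Pi.smul_apply, Pi.add_apply, smul_eq_mul]
  field_simp
  ring

theorem hE3 (hsm : ContDiff ℝ (⊤ : ℕ∞) (fun p : ℝ × ℝ => γ p.1 p.2))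
    (harc : ∀ x t, dot3 (Dx γ x t) (Dx γ x t) = 1)
    (hreg : ∀ x t, Dxx γ x t ≠ 0) (x t : ℝ) :
    HasDerivAt (fun x' => e3f γ x' t)
      ((0:ℝ) • Dx γ x t + (-(tors γ x t)) • Dxx γ x t
        + (k1f γ x t / curv γ x t) • e3f γ x t) x := by
  have kne : curv γ x t ≠ 0 := ne_of_gt (kpos hreg x t)
  have h : HasDerivAt (fun x' => e3f γ x' t)
      (cross3 (Dxx γ x t) (Dxx γ x t) + cross3 (Dx γ x t) (g3f γ x t)) x :=
    (hD2 hsm x t).cross3' (hD3 hsm x t)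
  convert h using 1
  have hg1e3 : cross3 (Dx γ x t) (e3f γ x t) = -(Dxx γ x t) := by
    unfold e3f
    rw [cross3_cross3, horth hsm harc x t, harc x t]
    funext i
    simp
  rw [cross3_self, hstar hsm harc hreg x t, cross3_add_right, cross3_add_right,
    cross3_smul_right, cross3_smul_right, cross3_smul_right, cross3_self, hg1e3]
  rw [show cross3 (Dx γ x t) (Dxx γ x t) = e3f γ x t from rfl]
  funext i
  simp only [Pi.add_apply, Pi.smul_apply, Pi.neg_apply, Pi.zero_apply, smul_eq_mul,
    Pi.sub_apply]
  ring
end geometry2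

section geometry3
variable (γ : ℝ → ℝ → Fin 3 → ℝ)

def k4f (x t : ℝ) : ℝ := deriv (fun y => k3f γ y t) x
def Q1f (x t : ℝ) : ℝ := curv γ x t ^ 2 / 2 - lamf γ t ^ 2 + k2f γ x t / curv γ x t
def R1f (x t : ℝ) : ℝ := -(lamf γ t * k1f γ x t / curv γ x t)
def V1f (x t : ℝ) : Fin 3 → ℝ :=
  (0:ℝ) • Dx γ x t + Q1f γ x t • Dxx γ x t + R1f γ x t • e3f γ x t
def P2f (x t : ℝ) : ℝ := -(curv γ x t ^ 4) / 2 + curv γ x t ^ 2 * lamf γ t ^ 2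
  - curv γ x t * k2f γ x t
def Q2f (x t : ℝ) : ℝ := 3 / 2 * curv γ x t * k1f γ x t + k3f γ x t / curv γ x t
def R2f (x t : ℝ) : ℝ := lamf γ t * curv γ x t ^ 2 / 2 - lamf γ t ^ 3
def V2f (x t : ℝ) : Fin 3 → ℝ :=
  P2f γ x t • Dx γ x t + Q2f γ x t • Dxx γ x t + R2f γ x t • e3f γ x t
def P3f (x t : ℝ) : ℝ := -(7 / 2) * curv γ x t ^ 3 * k1f γ x t
  + 2 * curv γ x t * k1f γ x t * lamf γ t ^ 2 - k1f γ x t * k2f γ x t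
  - 2 * curv γ x t * k3f γ x t
def Q3f (x t : ℝ) : ℝ := -(curv γ x t ^ 4) / 2 + curv γ x t ^ 2 * lamf γ t ^ 2 / 2
  + curv γ x t * k2f γ x t / 2 + 3 * k1f γ x t ^ 2 + k4f γ x t / curv γ x t + lamf γ t ^ 4
def R3f (x t : ℝ) : ℝ := 3 * lamf γ t * curv γ x t * k1f γ x t
  + lamf γ t * k3f γ x t / curv γ x t - lamf γ t ^ 3 * k1f γ x t / curv γ x t
def V3f (x t : ℝ) : Fin 3 → ℝ :=
  P3f γ x t • Dx γ x t + Q3f γ x t • Dxx γ x t + R3f γ x t • e3f γ x t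

variable {γ}

theorem hlam (hconst : ∀ x y t, tors γ x t = tors γ y t) (x t : ℝ) :
    tors γ x t = lamf γ t := hconst x 0 t

theorem hstar' (hsm : ContDiff ℝ (⊤ : ℕ∞) (fun p : ℝ × ℝ => γ p.1 p.2))
    (harc : ∀ x t, dot3 (Dx γ x t) (Dx γ x t) = 1)
    (hreg : ∀ x t, Dxx γ x t ≠ 0)
    (hconst : ∀ x y t, tors γ x t = tors γ y t) (x t : ℝ) :
    g3f γ x t = (-(curv γ x t ^ 2)) • Dx γ x t
      + (k1f γ x t / curv γ x t) • Dxx γ x t + lamf γ t • e3f γ x t := by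
  rw [hstar hsm harc hreg x t, hlam hconst x t]

theorem hD2' (hsm : ContDiff ℝ (⊤ : ℕ∞) (fun p : ℝ × ℝ => γ p.1 p.2))
    (harc : ∀ x t, dot3 (Dx γ x t) (Dx γ x t) = 1)
    (hreg : ∀ x t, Dxx γ x t ≠ 0)
    (hconst : ∀ x y t, tors γ x t = tors γ y t) (x t : ℝ) :
    HasDerivAt (fun x' => Dxx γ x' t)
      ((-(curv γ x t ^ 2)) • Dx γ x t + (k1f γ x t / curv γ x t) • Dxx γ x t
        + lamf γ t • e3f γ x t) x := by
  have h := hD3 hsm x t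
  rwa [hstar' hsm harc hreg hconst x t] at h

theorem hE3' (hsm : ContDiff ℝ (⊤ : ℕ∞) (fun p : ℝ × ℝ => γ p.1 p.2))
    (harc : ∀ x t, dot3 (Dx γ x t) (Dx γ x t) = 1)
    (hreg : ∀ x t, Dxx γ x t ≠ 0)
    (hconst : ∀ x y t, tors γ x t = tors γ y t) (x t : ℝ) :
    HasDerivAt (fun x' => e3f γ x' t)
      ((-(lamf γ t)) • Dxx γ x t + (k1f γ x t / curv γ x t) • e3f γ x t) x := by
  have h := hE3 hsm harc hreg x t
  rw [hlam hconst x t] at h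
  convert h using 1
  funext i
  simp only [Pi.add_apply, Pi.smul_apply, smul_eq_mul, Pi.zero_apply]
  ring

theorem hflows (hsm : ContDiff ℝ (⊤ : ℕ∞) (fun p : ℝ × ℝ => γ p.1 p.2))
    (hreg : ∀ x t, Dxx γ x t ≠ 0)
    (hconst : ∀ x y t, tors γ x t = tors γ y t)
    (hflow : ∀ x t, deriv (fun s => γ x s) t =
      ((curv γ x t) ^ 2 / 2 - 3 * (tors γ x t) ^ 2) • Dx γ x t
      + (deriv (fun y => curv γ y t) x) • Nv γ x t
      - (2 * tors γ x t * curv γ x t) • Bv γ x t) (x t : ℝ) :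
    deriv (fun s => γ x s) t
      = (curv γ x t ^ 2 / 2 - 3 * lamf γ t ^ 2) • Dx γ x t
        + (k1f γ x t / curv γ x t) • Dxx γ x t + (-(2 * lamf γ t)) • e3f γ x t := by
  have kne : curv γ x t ≠ 0 := ne_of_gt (kpos hreg x t)
  rw [hflow x t, hlam hconst x t]
  have hBv : Bv γ x t = (curv γ x t)⁻¹ • e3f γ x t := by
    show cross3 (Dx γ x t) ((curv γ x t)⁻¹ • Dxx γ x t) = _
    rw [cross3_smul_right]
    rfl
  rw [hBv]
  show _ • Dx γ x t + k1f γ x t • ((curv γ x t)⁻¹ • Dxx γ x t) - _ • _ • e3f γ x t = _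
  funext i
  simp only [Pi.add_apply, Pi.sub_apply, Pi.smul_apply, smul_eq_mul]
  field_simp
  ring

theorem pd2Dx (hsm : ContDiff ℝ (⊤ : ℕ∞) (fun p : ℝ × ℝ => γ p.1 p.2))
    (harc : ∀ x t, dot3 (Dx γ x t) (Dx γ x t) = 1)
    (hreg : ∀ x t, Dxx γ x t ≠ 0)
    (hconst : ∀ x y t, tors γ x t = tors γ y t)
    (hflow : ∀ x t, deriv (fun s => γ x s) t =
      ((curv γ x t) ^ 2 / 2 - 3 * (tors γ x t) ^ 2) • Dx γ x t
      + (deriv (fun y => curv γ y t) x) • Nv γ x t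
      - (2 * tors γ x t * curv γ x t) • Bv γ x t) (x t : ℝ) :
    deriv (fun s => Dx γ x s) t = V1f γ x t := by
  have kne : curv γ x t ≠ 0 := ne_of_gt (kpos hreg x t)
  have hcl : deriv (fun s => Dx γ x s) t
      = deriv (fun x' => deriv (fun s => γ x' s) t) x := clairaut (sm0 hsm) x t
  rw [hcl]
  rw [show (fun x' => deriv (fun s => γ x' s) t)
      = fun x' => (curv γ x' t ^ 2 / 2 - 3 * lamf γ t ^ 2) • Dx γ x' t
        + (k1f γ x' t / curv γ x' t) • Dxx γ x' t + (-(2 * lamf γ t)) • e3f γ x' t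
    from funext fun y => hflows hsm hreg hconst hflow y t]
  have hp : HasDerivAt (fun x' => curv γ x' t ^ 2 / 2 - 3 * lamf γ t ^ 2)
      (2 * curv γ x t ^ (2-1) * k1f γ x t / 2) x :=
    (((hK1 hsm hreg x t).pow 2).div_const 2).sub_const _
  have hq : HasDerivAt (fun x' => k1f γ x' t / curv γ x' t)
      ((k2f γ x t * curv γ x t - k1f γ x t * k1f γ x t) / curv γ x t ^ 2) x :=
    (hK2 hsm hreg x t).div (hK1 hsm hreg x t) kne
  have hr : HasDerivAt (fun _ : ℝ => -(2 * lamf γ t)) 0 x := hasDerivAt_const _ _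
  have hfd := frame_deriv (x := x) (u1 := fun x' => Dx γ x' t) (u2 := fun x' => Dxx γ x' t) (u3 := fun x' => e3f γ x' t) (hD2 hsm x t) (hD2' hsm harc hreg hconst x t)
    (hE3' hsm harc hreg hconst x t) hp hq hr
  rw [hfd.deriv]
  unfold V1f Q1f R1f
  funext i
  simp only [Pi.add_apply, Pi.smul_apply, smul_eq_mul, Pi.zero_apply]
  field_simp
  ring
end geometry3

section geometry4
variable {γ : ℝ → ℝ → Fin 3 → ℝ}

theorem pd2Dxx (hsm : ContDiff ℝ (⊤ : ℕ∞) (fun p : ℝ × ℝ => γ p.1 p.2))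
    (harc : ∀ x t, dot3 (Dx γ x t) (Dx γ x t) = 1)
    (hreg : ∀ x t, Dxx γ x t ≠ 0)
    (hconst : ∀ x y t, tors γ x t = tors γ y t)
    (hflow : ∀ x t, deriv (fun s => γ x s) t =
      ((curv γ x t) ^ 2 / 2 - 3 * (tors γ x t) ^ 2) • Dx γ x t
      + (deriv (fun y => curv γ y t) x) • Nv γ x t
      - (2 * tors γ x t * curv γ x t) • Bv γ x t) (x t : ℝ) :
    deriv (fun s => Dxx γ x s) t = V2f γ x t := by
  have kne : curv γ x t ≠ 0 := ne_of_gt (kpos hreg x t)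
  have hcl : deriv (fun s => Dxx γ x s) t
      = deriv (fun x' => deriv (fun s => Dx γ x' s) t) x := clairaut (sm1 hsm) x t
  rw [hcl]
  rw [show (fun x' => deriv (fun s => Dx γ x' s) t)
      = fun x' => (0:ℝ) • Dx γ x' t + Q1f γ x' t • Dxx γ x' t + R1f γ x' t • e3f γ x' t
    from funext fun y => pd2Dx hsm harc hreg hconst hflow y t]
  have hp : HasDerivAt (fun _ : ℝ => (0:ℝ)) 0 x := hasDerivAt_const _ _
  have hq : HasDerivAt (fun x' => Q1f γ x' t)
      (2 * curv γ x t ^ (2-1) * k1f γ x t / 2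
        + (k3f γ x t * curv γ x t - k2f γ x t * k1f γ x t) / curv γ x t ^ 2) x :=
    ((((hK1 hsm hreg x t).pow 2).div_const 2).sub_const _).add
      ((hK3 hsm hreg x t).div (hK1 hsm hreg x t) kne)
  have hr : HasDerivAt (fun x' => R1f γ x' t)
      (-((lamf γ t * k2f γ x t * curv γ x t - lamf γ t * k1f γ x t * k1f γ x t)
        / curv γ x t ^ 2)) x :=
    (((hK2 hsm hreg x t).const_mul (lamf γ t)).div (hK1 hsm hreg x t) kne).neg
  have hfd := frame_deriv (x := x) (u1 := fun x' => Dx γ x' t)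
    (u2 := fun x' => Dxx γ x' t) (u3 := fun x' => e3f γ x' t) (hD2 hsm x t)
    (hD2' hsm harc hreg hconst x t) (hE3' hsm harc hreg hconst x t) hp hq hr
  rw [hfd.deriv]
  unfold V2f P2f Q2f R2f Q1f R1f
  funext i
  simp only [Pi.add_apply, Pi.smul_apply, smul_eq_mul, Pi.zero_apply]
  field_simp
  ring

theorem pd2g3 (hsm : ContDiff ℝ (⊤ : ℕ∞) (fun p : ℝ × ℝ => γ p.1 p.2))
    (harc : ∀ x t, dot3 (Dx γ x t) (Dx γ x t) = 1)
    (hreg : ∀ x t, Dxx γ x t ≠ 0)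
    (hconst : ∀ x y t, tors γ x t = tors γ y t)
    (hflow : ∀ x t, deriv (fun s => γ x s) t =
      ((curv γ x t) ^ 2 / 2 - 3 * (tors γ x t) ^ 2) • Dx γ x t
      + (deriv (fun y => curv γ y t) x) • Nv γ x t
      - (2 * tors γ x t * curv γ x t) • Bv γ x t) (x t : ℝ) :
    deriv (fun s => g3f γ x s) t = V3f γ x t := by
  have kne : curv γ x t ≠ 0 := ne_of_gt (kpos hreg x t)
  have hcl : deriv (fun s => g3f γ x s) t
      = deriv (fun x' => deriv (fun s => Dxx γ x' s) t) x := clairaut (sm2 hsm) x t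
  rw [hcl]
  rw [show (fun x' => deriv (fun s => Dxx γ x' s) t)
      = fun x' => P2f γ x' t • Dx γ x' t + Q2f γ x' t • Dxx γ x' t + R2f γ x' t • e3f γ x' t
    from funext fun y => pd2Dxx hsm harc hreg hconst hflow y t]
  have hp : HasDerivAt (fun x' => P2f γ x' t)
      (-(4 * curv γ x t ^ (4-1) * k1f γ x t) / 2
        + (2 * curv γ x t ^ (2-1) * k1f γ x t * lamf γ t ^ 2)
        - (k1f γ x t * k2f γ x t + curv γ x t * k3f γ x t)) x := by
    unfold P2f
    exact ((((hK1 hsm hreg x t).pow 4).neg.div_const 2).add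
      (((hK1 hsm hreg x t).pow 2).mul_const (lamf γ t ^ 2))).sub
      ((hK1 hsm hreg x t).mul (hK3 hsm hreg x t))
  have hq : HasDerivAt (fun x' => Q2f γ x' t)
      ((3 / 2 * k1f γ x t * k1f γ x t + 3 / 2 * curv γ x t * k2f γ x t)
        + (k4f γ x t * curv γ x t - k3f γ x t * k1f γ x t) / curv γ x t ^ 2) x := by
    unfold Q2f
    exact (((hK1 hsm hreg x t).const_mul (3/2)).mul (hK2 hsm hreg x t)).add
      ((hK4 hsm hreg x t).div (hK1 hsm hreg x t) kne)
  have hr : HasDerivAt (fun x' => R2f γ x' t)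
      (lamf γ t * (2 * curv γ x t ^ (2-1) * k1f γ x t) / 2) x := by
    unfold R2f
    exact ((((hK1 hsm hreg x t).pow 2).const_mul (lamf γ t)).div_const 2).sub_const _
  have hfd := frame_deriv (x := x) (u1 := fun x' => Dx γ x' t)
    (u2 := fun x' => Dxx γ x' t) (u3 := fun x' => e3f γ x' t) (hD2 hsm x t)
    (hD2' hsm harc hreg hconst x t) (hE3' hsm harc hreg hconst x t) hp hq hr
  rw [hfd.deriv]
  unfold V3f P3f Q3f R3f P2f Q2f R2f
  funext i
  simp only [Pi.add_apply, Pi.smul_apply, smul_eq_mul, Pi.zero_apply]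
  field_simp
  ring
end geometry4

section algebra3
variable (a b : Fin 3 → ℝ)
lemma dot3_cross_self_left' : dot3 (cross3 a b) a = 0 := by simp [dot3, cross3]; ring
lemma dot3_cross_self_right' : dot3 (cross3 a b) b = 0 := by simp [dot3, cross3]; ring
end algebra3

section geometry5
variable {γ : ℝ → ℝ → Fin 3 → ℝ}

theorem htd1 (hsm : ContDiff ℝ (⊤ : ℕ∞) (fun p : ℝ × ℝ => γ p.1 p.2))
    (harc : ∀ x t, dot3 (Dx γ x t) (Dx γ x t) = 1)
    (hreg : ∀ x t, Dxx γ x t ≠ 0)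
    (hconst : ∀ x y t, tors γ x t = tors γ y t)
    (hflow : ∀ x t, deriv (fun s => γ x s) t =
      ((curv γ x t) ^ 2 / 2 - 3 * (tors γ x t) ^ 2) • Dx γ x t
      + (deriv (fun y => curv γ y t) x) • Nv γ x t
      - (2 * tors γ x t * curv γ x t) • Bv γ x t) (x t : ℝ) :
    HasDerivAt (fun s => Dx γ x s) (V1f γ x t) t := by
  have h := ((smooth_fix1 (sm1 hsm) x).differentiable (by norm_num) t).hasDerivAt
  rwa [pd2Dx hsm harc hreg hconst hflow x t] at h

theorem htd2 (hsm : ContDiff ℝ (⊤ : ℕ∞) (fun p : ℝ × ℝ => γ p.1 p.2))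
    (harc : ∀ x t, dot3 (Dx γ x t) (Dx γ x t) = 1)
    (hreg : ∀ x t, Dxx γ x t ≠ 0)
    (hconst : ∀ x y t, tors γ x t = tors γ y t)
    (hflow : ∀ x t, deriv (fun s => γ x s) t =
      ((curv γ x t) ^ 2 / 2 - 3 * (tors γ x t) ^ 2) • Dx γ x t
      + (deriv (fun y => curv γ y t) x) • Nv γ x t
      - (2 * tors γ x t * curv γ x t) • Bv γ x t) (x t : ℝ) :
    HasDerivAt (fun s => Dxx γ x s) (V2f γ x t) t := by
  have h := ((smooth_fix1 (sm2 hsm) x).differentiable (by norm_num) t).hasDerivAt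
  rwa [pd2Dxx hsm harc hreg hconst hflow x t] at h

theorem htd3 (hsm : ContDiff ℝ (⊤ : ℕ∞) (fun p : ℝ × ℝ => γ p.1 p.2))
    (harc : ∀ x t, dot3 (Dx γ x t) (Dx γ x t) = 1)
    (hreg : ∀ x t, Dxx γ x t ≠ 0)
    (hconst : ∀ x y t, tors γ x t = tors γ y t)
    (hflow : ∀ x t, deriv (fun s => γ x s) t =
      ((curv γ x t) ^ 2 / 2 - 3 * (tors γ x t) ^ 2) • Dx γ x t
      + (deriv (fun y => curv γ y t) x) • Nv γ x t
      - (2 * tors γ x t * curv γ x t) • Bv γ x t) (x t : ℝ) :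
    HasDerivAt (fun s => g3f γ x s) (V3f γ x t) t := by
  have h := ((smooth_fix1 (sm3 hsm) x).differentiable (by norm_num) t).hasDerivAt
  rwa [pd2g3 hsm harc hreg hconst hflow x t] at h
end geometry5

/-- Under the mKdV flow, the arc-length and the torsion are preserved:
⟨∂ₓγ, ∂ₜ∂ₓγ⟩ = 0 everywhere and ∂ₜλ = 0. -/
theorem statement4 (γ : ℝ → ℝ → Fin 3 → ℝ)
    (hsm : ContDiff ℝ (⊤ : ℕ∞) (fun p : ℝ × ℝ => γ p.1 p.2))
    (harc : ∀ x t, dot3 (Dx γ x t) (Dx γ x t) = 1)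
    (hreg : ∀ x t, Dxx γ x t ≠ 0)
    (hconst : ∀ x y t, tors γ x t = tors γ y t)
    (hflow : ∀ x t, deriv (fun s => γ x s) t =
      ((curv γ x t) ^ 2 / 2 - 3 * (tors γ x t) ^ 2) • Dx γ x t
      + (deriv (fun y => curv γ y t) x) • Nv γ x t
      - (2 * tors γ x t * curv γ x t) • Bv γ x t) :
    (∀ x t, dot3 (Dx γ x t) (deriv (fun s => Dx γ x s) t) = 0) ∧
    (∀ x t, deriv (fun s => tors γ x s) t = 0) := by
  constructor
  · intro x t
    have ht : HasDerivAt (fun s => Dx γ x s) (deriv (fun s => Dx γ x s) t) t :=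
      ((smooth_fix1 (sm1 hsm) x).differentiable (by norm_num) t).hasDerivAt
    have hdd := ht.dot3' ht
    rw [show (fun s => dot3 (Dx γ x s) (Dx γ x s)) = fun _ => (1:ℝ)
      from funext fun s => harc x s] at hdd
    have h0 := hdd.unique (hasDerivAt_const t 1)
    have hc := dot3_comm (deriv (fun s => Dx γ x s) t) (Dx γ x t)
    linarith
  · intro x t
    have kne : curv γ x t ≠ 0 := ne_of_gt (kpos hreg x t)
    have hd22ne : dot3 (Dxx γ x t) (Dxx γ x t) ≠ 0 := ne_of_gt (dot3_pos _ (hreg x t))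
    have h1 := htd1 hsm harc hreg hconst hflow x t
    have h2 := htd2 hsm harc hreg hconst hflow x t
    have h3 := htd3 hsm harc hreg hconst hflow x t
    have hfun : (fun s => tors γ x s)
        = fun s => (dot3 (Dxx γ x s) (Dxx γ x s))⁻¹
            * dot3 (cross3 (Dx γ x s) (Dxx γ x s)) (g3f γ x s) := by
      funext s
      rw [htors hsm hreg x s, ksq hreg x s]
      rfl
    rw [hfun]
    have hP : HasDerivAt (fun s => cross3 (Dx γ x s) (Dxx γ x s))
        (cross3 (V1f γ x t) (Dxx γ x t) + cross3 (Dx γ x t) (V2f γ x t)) t :=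
      h1.cross3' h2
    have hW := hP.dot3' h3
    have hI : HasDerivAt (fun s => (dot3 (Dxx γ x s) (Dxx γ x s))⁻¹) _ t :=
      (h2.dot3' h2).inv hd22ne
    have htot : HasDerivAt (fun s => (dot3 (Dxx γ x s) (Dxx γ x s))⁻¹
        * dot3 (cross3 (Dx γ x s) (Dxx γ x s)) (g3f γ x s)) _ t := hI.mul hW
    rw [htot.deriv]
    rw [show g3f γ x t = (-(curv γ x t ^ 2)) • Dx γ x t
      + (k1f γ x t / curv γ x t) • Dxx γ x t + lamf γ t • e3f γ x t
      from hstar' hsm harc hreg hconst x t]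
    rw [show dot3 (Dxx γ x t) (Dxx γ x t) = curv γ x t ^ 2 from (ksq hreg x t).symm]
    have hA1 : dot3 (Dx γ x t) (Dx γ x t) = 1 := harc x t
    have hA2 : dot3 (Dx γ x t) (Dxx γ x t) = 0 := horth hsm harc x t
    have hA2' : dot3 (Dxx γ x t) (Dx γ x t) = 0 := by rw [dot3_comm]; exact hA2
    have hA3 : dot3 (Dxx γ x t) (Dxx γ x t) = curv γ x t ^ 2 := (ksq hreg x t).symm
    unfold V1f V2f V3f e3f Q1f R1f P2f Q2f R2f P3f Q3f R3f
    simp only [cross3_add_left, cross3_add_right, cross3_smul_left, cross3_smul_right,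
      cross3_self, cross3_cross3, cross3_cross3_left, cross3_zero_left, cross3_zero_right,
      dot3_add_left, dot3_add_right, dot3_smul_left, dot3_smul_right, dot3_sub_left,
      dot3_sub_right, dot3_neg_left, dot3_neg_right, dot3_zero_left, dot3_zero_right,
      dot3_cross_self_left, dot3_cross_self_right, dot3_cross_self_left',
      dot3_cross_self_right', lagrange3, smul_zero, zero_smul, add_zero, zero_add,
      hA1, hA2, hA2', hA3]
    field_simp
    ring
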